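/- Let V be a 4-dimensional complex vector space with a nondegenerate alternating bilinear form σ, and let A ∈ 𝔰𝔭(V,σ) with A ∘ A = 0 and rank A ≤ 1. Then there exists a unique t ∈ W with ε(t) = A, and this t satisfies τ(t) = t; i.e. the fiber of ε over a rank ≤ 1 element of Z consists of a unique point, which is fixed by τ. -/

import Mathlib

/-!
A rank-one element of `𝔰𝔭(V, σ)` has the form `x ↦ c σ(g, x) g`, since skew-adjointness forces
its defining functional to be proportional to `σ(g, ·)`; over `ℂ` this is `ε(u ⊗ u)` with
`u = √(c/2) g`. Conversely, if `v, w` are linearly independent, then nondegeneracy makes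
`σ(v, ·)` and `σ(w, ·)` independent, so `ε(v ⊗ w)` has rank two. Hence every point of the fiber
is `u ⊗ u` for some `u`, and `ε(u ⊗ u)` determines `u` up to sign, hence `u ⊗ u`.
-/

open TensorProduct

/-- The endomorphism `ε(v ⊗ w) : x ↦ σ(v,x)·w + σ(w,x)·v` of `V`, for `v w : V`. -/
def eps {V : Type*} [AddCommGroup V] [Module ℂ V]
    (σ : V →ₗ[ℂ] V →ₗ[ℂ] ℂ) (v w : V) : V →ₗ[ℂ] V :=
  (σ v).smulRight w + (σ w).smulRight v

open Module

theorem LinearMap.SeparatingLeft.exists_ne_zero {R M N P : Type*} [CommSemiring R]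
    [AddCommMonoid M] [Module R M] [AddCommMonoid N] [Module R N] [AddCommMonoid P] [Module R P]
    {B : M →ₗ[R] N →ₗ[R] P} (hB : B.SeparatingLeft) {v : M} (hv : v ≠ 0) : ∃ x, B v x ≠ 0 := by
  by_contra! h
  exact hv (hB v h)

theorem exists_smul_eq_of_finrank_le_one {K W : Type*} [Field K] [AddCommGroup W] [Module K W]
    [FiniteDimensional K W] (h : finrank K W ≤ 1) {x : W} (hx : x ≠ 0) (y : W) :
    ∃ c : K, c • x = y :=
  exists_smul_eq_of_finrank_eq_one
    (le_antisymm h (finrank_pos_iff_exists_ne_zero.mpr ⟨x, hx⟩)) hx y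

section

variable {V : Type*} [AddCommGroup V] [Module ℂ V] {σ : V →ₗ[ℂ] V →ₗ[ℂ] ℂ}

@[simp]
theorem eps_apply (v w x : V) : eps σ v w x = σ v x • w + σ w x • v := rfl

theorem eps_self_apply (v x : V) : eps σ v v x = (2 * σ v x) • v := by
  rw [eps_apply, two_mul, add_smul]

theorem tmul_self_eq_of_eps_self_eq (hσ : σ.SeparatingLeft) {u v : V}
    (h : eps σ u u = eps σ v v) : u ⊗ₜ[ℂ] u = v ⊗ₜ[ℂ] v := by
  have huv (x : V) : σ u x • u = σ v x • v := by
    have hx := LinearMap.congr_fun h x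
    rw [eps_self_apply, eps_self_apply, mul_smul, mul_smul] at hx
    exact smul_right_injective V two_ne_zero hx
  by_cases hu : u = 0
  · obtain rfl := hu
    have hv : v = 0 := by
      by_contra hv
      refine hv (hσ v fun x => (smul_eq_zero.mp ?_).resolve_right hv)
      simpa using (huv x).symm
    rw [hv]
  obtain ⟨x, hx⟩ := hσ.exists_ne_zero hu
  have hu_eq : u = (σ v x / σ u x) • v := by
    rw [div_eq_inv_mul, mul_smul, ← huv x, inv_smul_smul₀ hx]
  set μ := σ v x / σ u x
  have hvx : σ v x ≠ 0 := by
    intro h0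
    apply hx
    rw [hu_eq, map_smul, LinearMap.smul_apply, h0, smul_zero]
  have hv : v ≠ 0 := by
    rintro rfl
    simp at hvx
  have hμ : μ ^ 2 = 1 := by
    have hx' := huv x
    rw [hu_eq, map_smul, LinearMap.smul_apply, smul_smul, smul_eq_mul] at hx'
    exact mul_right_cancel₀ hvx (by linear_combination smul_left_injective ℂ hv hx')
  rw [hu_eq, smul_tmul_smul, ← sq, hμ, one_smul]

theorem exists_eq_smul_of_finrank_range_eps_le_one [FiniteDimensional ℂ V]
    (hσ : σ.SeparatingLeft) {v w : V} (hv : v ≠ 0)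
    (hrk : finrank ℂ (LinearMap.range (eps σ v w)) ≤ 1) : ∃ a : ℂ, w = a • v := by
  by_contra! hdep
  have hind := (LinearIndependent.pair_iff' hv).mpr fun a h => hdep a h.symm
  rw [LinearIndependent.pair_iff] at hind
  obtain ⟨x, hx⟩ := hσ.exists_ne_zero hv
  have hεx : eps σ v w x ≠ 0 := by
    intro h0
    rw [eps_apply, add_comm] at h0
    exact hx (hind _ _ h0).2
  -- two images of `eps σ v w` are proportional, so the functionals `σ v`, `σ w` are too
  have hprop (y : V) : σ (σ v x • w - σ w x • v) y = 0 := by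
    obtain ⟨c, hc⟩ := exists_smul_eq_of_finrank_le_one hrk
      (x := ⟨_, LinearMap.mem_range_self _ x⟩) (Subtype.coe_ne_coe.mp hεx)
      ⟨_, LinearMap.mem_range_self _ y⟩
    have hc' := congrArg Subtype.val hc
    simp only [SetLike.val_smul, eps_apply, smul_add, smul_smul] at hc'
    obtain ⟨hv', hw'⟩ := hind (c * σ w x - σ w y) (c * σ v x - σ v y)
      (by linear_combination (norm := module) hc')
    simp only [map_sub, map_smul, LinearMap.sub_apply, LinearMap.smul_apply, smul_eq_mul]
    linear_combination σ w x * hw' - σ v x * hv'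
  have := hind (-σ w x) (σ v x) (by linear_combination (norm := module) hσ _ hprop)
  exact hx this.2

theorem eps_smul_self (d : ℂ) (v : V) : eps σ (d • v) (d • v) = (d ^ 2) • eps σ v v := by
  ext x
  simp only [eps_self_apply, map_smul, LinearMap.smul_apply, smul_eq_mul, smul_smul]
  ring_nf

theorem exists_tmul_self_of_finrank_range_eps_le_one [FiniteDimensional ℂ V]
    (hσ : σ.SeparatingLeft) {v w : V} (hrk : finrank ℂ (LinearMap.range (eps σ v w)) ≤ 1) :
    ∃ u : V, v ⊗ₜ[ℂ] w = u ⊗ₜ[ℂ] u ∧ eps σ v w = eps σ u u := by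
  by_cases hv : v = 0
  · refine ⟨0, by simp [hv], ?_⟩
    ext x
    simp [hv]
  obtain ⟨a, rfl⟩ := exists_eq_smul_of_finrank_range_eps_le_one hσ hv hrk
  obtain ⟨d, hd⟩ := IsAlgClosed.exists_pow_nat_eq a two_pos
  refine ⟨d • v, ?_, ?_⟩
  · rw [smul_tmul_smul, ← sq, hd, tmul_smul]
  · rw [eps_smul_self, hd]
    ext x
    simp only [eps_apply, map_smul, LinearMap.smul_apply, smul_eq_mul, smul_add, smul_smul]
    ring_nf

theorem exists_eps_self_eq [FiniteDimensional ℂ V] (halt : σ.IsAlt) (hσ : σ.SeparatingLeft)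
    {A : V →ₗ[ℂ] V} (hA : ∀ v w : V, σ (A v) w + σ v (A w) = 0)
    (hrk : finrank ℂ (LinearMap.range A) ≤ 1) : ∃ u : V, eps σ u u = A := by
  obtain ⟨g, hg⟩ := finrank_le_one_iff.mp hrk
  choose f hf using fun x => hg ⟨A x, LinearMap.mem_range_self A x⟩
  have hAf (x : V) : A x = f x • (g : V) := (congrArg Subtype.val (hf x)).symm
  by_cases hg0 : (g : V) = 0
  · refine ⟨0, ?_⟩
    ext x
    simp [hAf, hg0]
  obtain ⟨y, hy⟩ := hσ.exists_ne_zero hg0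
  -- skew-adjointness forces `f` to be a multiple of `σ g`
  have hf_eq (x : V) : f x = f y / σ g y * σ g x := by
    have h := hA x y
    rw [hAf, hAf, map_smul, map_smul, LinearMap.smul_apply, ← halt.neg g x, smul_eq_mul,
      smul_eq_mul] at h
    field_simp
    linear_combination h
  obtain ⟨d, hd⟩ := IsAlgClosed.exists_pow_nat_eq (f y / σ g y / 2) two_pos
  refine ⟨d • g, ?_⟩
  ext x
  rw [eps_smul_self, LinearMap.smul_apply, eps_self_apply, hAf, hf_eq, hd, smul_smul]
  ring_nf

end

theorem eps_fiber_over_rank_le_one_general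
    {V : Type*} [AddCommGroup V] [Module ℂ V] [FiniteDimensional ℂ V]
    (σ : V →ₗ[ℂ] V →ₗ[ℂ] ℂ)
    (halt : ∀ v : V, σ v v = 0)
    (hnd : ∀ v : V, (∀ w : V, σ v w = 0) → v = 0)
    (A : V →ₗ[ℂ] V)
    (hA : ∀ v w : V, σ (A v) w + σ v (A w) = 0)
    (hrk : Module.finrank ℂ (LinearMap.range A) ≤ 1) :
    ∃ t : V ⊗[ℂ] V,
      (∃ v w : V, σ v w = 0 ∧ t = v ⊗ₜ[ℂ] w ∧ eps σ v w = A) ∧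
      (TensorProduct.comm ℂ V V) t = t ∧
      ∀ t' : V ⊗[ℂ] V,
        (∃ v w : V, σ v w = 0 ∧ t' = v ⊗ₜ[ℂ] w ∧ eps σ v w = A) → t' = t := by
  obtain ⟨u, hu⟩ := exists_eps_self_eq halt hnd hA hrk
  refine ⟨u ⊗ₜ u, ⟨u, u, halt u, rfl, hu⟩, comm_tmul ℂ V V u u, ?_⟩
  rintro _ ⟨v, w, -, rfl, hvw⟩
  obtain ⟨u', htmul, heps⟩ := exists_tmul_self_of_finrank_range_eps_le_one hnd (hvw ▸ hrk)
  rw [htmul]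
  exact tmul_self_eq_of_eps_self_eq hnd (heps.symm.trans (hvw.trans hu.symm))

/-- Let `V` be a 4-dimensional complex vector space with a nondegenerate
alternating bilinear form `σ`, and let `A ∈ 𝔰𝔭(V,σ)` with `A ∘ A = 0` and `rank A ≤ 1`.
Then there exists a unique `t ∈ W` with `ε(t) = A`, and this `t` satisfies `τ(t) = t`
(where `τ` is the involution of `V ⊗ V` swapping the two factors); i.e. the fiber of `ε`
over a rank `≤ 1` element of `Z` consists of a unique point, which is fixed by `τ`. -/
theorem eps_fiber_over_rank_le_one
    {V : Type*} [AddCommGroup V] [Module ℂ V] [FiniteDimensional ℂ V]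
    (hdim : Module.finrank ℂ V = 4)
    (σ : V →ₗ[ℂ] V →ₗ[ℂ] ℂ)
    (halt : ∀ v : V, σ v v = 0)
    (hnd : ∀ v : V, (∀ w : V, σ v w = 0) → v = 0)
    (A : V →ₗ[ℂ] V)
    (hA : ∀ v w : V, σ (A v) w + σ v (A w) = 0)
    (hA2 : A ∘ₗ A = 0)
    (hrk : Module.finrank ℂ (LinearMap.range A) ≤ 1) :
    ∃ t : V ⊗[ℂ] V,
      (∃ v w : V, σ v w = 0 ∧ t = v ⊗ₜ[ℂ] w ∧ eps σ v w = A) ∧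
      (TensorProduct.comm ℂ V V) t = t ∧
      ∀ t' : V ⊗[ℂ] V,
        (∃ v w : V, σ v w = 0 ∧ t' = v ⊗ₜ[ℂ] w ∧ eps σ v w = A) → t' = t :=
  eps_fiber_over_rank_le_one_general σ halt hnd A hA hrk
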